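/- arXiv:1712.07084 — 5 statements merged into one kernel-verified Lean document; each statement's English description precedes it below -/
import Mathlib

section
/- Let C be a nonnegative bounded real random variable with E[C] finite, and let p ∈ (0,1]. Define the sequence T₁ = 0 and T_{L+1} = p·E[C] + (1−p)·( E[C·1{C ≤ T_L}] + T_L·P(C > T_L) ). Then the sequence (T_L) is nondecreasing in L. -/
/-!
The bracket in the recursion is the truncated mean `E[min(C, T_L)]`, so `T_{L+1} = f(T_L)` with
`f s = p E[C] + (1 - p) E[min(C, s)]`, which is monotone in `s` because `1 - p ≥ 0`. Iterating a
monotone map preserves the direction of the first step, and `T_2 = f 0 ≥ 0 = T_1` since `C ≥ 0`.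
-/

open MeasureTheory

theorem le_succ_of_monotone_of_eq_map {α : Type*} [Preorder α] {f : α → α} (hf : Monotone f)
    {x : ℕ → α} {k : ℕ} (hx : ∀ n, k ≤ n → x (n + 1) = f (x n)) (hk : x k ≤ x (k + 1)) :
    ∀ n, k ≤ n → x n ≤ x (n + 1) := by
  intro n hn
  induction n, hn using Nat.le_induction with
  | base => exact hk
  | succ n hkn ih =>
    calc x (n + 1) = f (x n) := hx n hkn
      _ ≤ f (x (n + 1)) := hf ih
      _ = x (n + 1 + 1) := (hx (n + 1) (by omega)).symm

section TruncatedMean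

variable {Ω : Type*} [MeasurableSpace Ω] {μ : Measure Ω} [IsFiniteMeasure μ] {C : Ω → ℝ}

theorem setIntegral_le_add_mul_measure_lt_eq_integral_min (hCmeas : Measurable C)
    (hCint : Integrable C μ) (s : ℝ) :
    (∫ ω in {ω | C ω ≤ s}, C ω ∂μ) + s * (μ {ω | s < C ω}).toReal
      = ∫ ω, min (C ω) s ∂μ := by
  have hle : MeasurableSet {ω | C ω ≤ s} := measurableSet_le hCmeas measurable_const
  have hcompl : {ω | C ω ≤ s}ᶜ = {ω | s < C ω} := by
    ext ω
    simp
  have below : ∫ ω in {ω | C ω ≤ s}, min (C ω) s ∂μ = ∫ ω in {ω | C ω ≤ s}, C ω ∂μ :=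
    setIntegral_congr_fun hle fun ω hω => min_eq_left hω
  have above : ∫ ω in {ω | s < C ω}, min (C ω) s ∂μ = s * (μ {ω | s < C ω}).toReal := by
    rw [setIntegral_congr_fun (measurableSet_lt measurable_const hCmeas)
      fun ω (hω : s < C ω) => min_eq_right hω.le, setIntegral_const, smul_eq_mul, mul_comm]
    rfl
  rw [← below, ← above, ← hcompl]
  exact integral_add_compl hle (hCint.inf (integrable_const s))

theorem monotone_integral_min (hCint : Integrable C μ) :
    Monotone fun s : ℝ => ∫ ω, min (C ω) s ∂μ := fun _ _ hst =>
  integral_mono (hCint.inf (integrable_const _)) (hCint.inf (integrable_const _))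
    fun _ => min_le_min le_rfl hst

end TruncatedMean

theorem threshold_recursion_monotone_general
    {Ω : Type*} [MeasurableSpace Ω] (μ : Measure Ω) [IsProbabilityMeasure μ]
    (C : Ω → ℝ) (hCmeas : Measurable C) (hCnonneg : ∀ ω, 0 ≤ C ω)
    (hCint : Integrable C μ)
    (p : ℝ) (hp : p ∈ Set.Ioc (0 : ℝ) 1)
    (T : ℕ → ℝ) (hT1 : T 1 = 0)
    (hTrec : ∀ L, 1 ≤ L →
      T (L + 1) = p * (∫ ω, C ω ∂μ) +
        (1 - p) * ((∫ ω in {ω | C ω ≤ T L}, C ω ∂μ)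
          + T L * (μ {ω | T L < C ω}).toReal)) :
    ∀ L, 1 ≤ L → T L ≤ T (L + 1) := by
  set f : ℝ → ℝ := fun s => p * (∫ ω, C ω ∂μ) + (1 - p) * ∫ ω, min (C ω) s ∂μ
  have hq : 0 ≤ 1 - p := sub_nonneg.2 hp.2
  have hrec : ∀ L, 1 ≤ L → T (L + 1) = f (T L) := fun L hL => by
    rw [hTrec L hL, setIntegral_le_add_mul_measure_lt_eq_integral_min hCmeas hCint]
  have hf : Monotone f := fun s t hst => by
    have := monotone_integral_min hCint hst
    simp only [f]
    gcongr
  have hbase : T 1 ≤ T 2 := by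
    rw [hrec 1 le_rfl, hT1]
    have := hp.1.le
    have : 0 ≤ ∫ ω, C ω ∂μ := integral_nonneg hCnonneg
    have : 0 ≤ ∫ ω, min (C ω) 0 ∂μ := integral_nonneg fun ω => le_min (hCnonneg ω) le_rfl
    simp only [f]
    positivity
  exact le_succ_of_monotone_of_eq_map hf hrec hbase

/-- The unlimited-cache proactive caching threshold recursion is nondecreasing. -/
theorem threshold_recursion_monotone
    {Ω : Type*} [MeasurableSpace Ω] (μ : Measure Ω) [IsProbabilityMeasure μ]
    (C : Ω → ℝ) (hCmeas : Measurable C) (hCnonneg : ∀ ω, 0 ≤ C ω)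
    (M : ℝ) (hCbdd : ∀ ω, C ω ≤ M)
    (hCint : Integrable C μ)
    (p : ℝ) (hp : p ∈ Set.Ioc (0 : ℝ) 1)
    (T : ℕ → ℝ) (hT1 : T 1 = 0)
    (hTrec : ∀ L, 1 ≤ L →
      T (L + 1) = p * (∫ ω, C ω ∂μ) +
        (1 - p) * ((∫ ω in {ω | C ω ≤ T L}, C ω ∂μ)
          + T L * (μ {ω | T L < C ω}).toReal)) :
    ∀ L, 1 ≤ L → T L ≤ T (L + 1) :=
  threshold_recursion_monotone_general μ C hCmeas hCnonneg hCint p hp T hT1 hTrec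
end

section
/- Let C be a nonnegative random variable with E[C] finite and p ∈ (0,1]. Define T₁ = 0 and T_{L+1} = p·E[C] + (1−p)(E[C·1{C ≤ T_L}] + T_L·P(C > T_L)). Then for every L ≥ 1, T_L ≤ E[C]. -/
open MeasureTheory

/-!
The recursion makes `T (L + 1)` a convex combination of `E[C]` and
`E[C · 1{C ≤ t}] + t · P(C > t) = E[min C t]` at `t = T L`, and `E[min C t] ≤ E[C]` for every `t`;
the start `T 1 = 0` is below `E[C]` because `C ≥ 0`.
-/

theorem setIntegral_le_add_mul_measure_lt_le_integral {Ω : Type*} [MeasurableSpace Ω]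
    {μ : Measure Ω} [IsFiniteMeasure μ] {f : Ω → ℝ} (hf : Measurable f) (hfi : Integrable f μ)
    (t : ℝ) :
    (∫ ω in {ω | f ω ≤ t}, f ω ∂μ) + t * (μ {ω | t < f ω}).toReal ≤ ∫ ω, f ω ∂μ := by
  have hcompl : {ω | f ω ≤ t}ᶜ = {ω | t < f ω} := by
    ext ω
    simp
  have hle : MeasurableSet {ω | f ω ≤ t} := hf measurableSet_Iic
  have hlt : MeasurableSet {ω | t < f ω} := hf measurableSet_Ioi
  have hconst : t * (μ {ω | t < f ω}).toReal ≤ ∫ ω in {ω | t < f ω}, f ω ∂μ :=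
    calc t * (μ {ω | t < f ω}).toReal = ∫ _ in {ω | t < f ω}, t ∂μ := by
          rw [setIntegral_const, smul_eq_mul, mul_comm, measureReal_def]
      _ ≤ ∫ ω in {ω | t < f ω}, f ω ∂μ :=
          setIntegral_mono_on (integrableOn_const (measure_ne_top μ _)) hfi.integrableOn hlt
            fun _ hω ↦ hω.le
  have hsplit := integral_add_compl hle hfi
  rw [hcompl] at hsplit
  linarith

/-- The unlimited-cache proactive caching thresholds never exceed the expected
reactive cost `E[C]`. -/
theorem threshold_le_expected_cost
    {Ω : Type*} [MeasurableSpace Ω] (μ : Measure Ω) [IsProbabilityMeasure μ]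
    (C : Ω → ℝ) (hCmeas : Measurable C) (hCnonneg : ∀ ω, 0 ≤ C ω)
    (hCint : Integrable C μ)
    (p : ℝ) (hp : p ∈ Set.Ioc (0 : ℝ) 1)
    (T : ℕ → ℝ) (hT1 : T 1 = 0)
    (hTrec : ∀ L, 1 ≤ L →
      T (L + 1) = p * (∫ ω, C ω ∂μ) +
        (1 - p) * ((∫ ω in {ω | C ω ≤ T L}, C ω ∂μ)
          + T L * (μ {ω | T L < C ω}).toReal)) :
    ∀ L, 1 ≤ L → T L ≤ ∫ ω, C ω ∂μ := by
  intro L hL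
  rcases hL.eq_or_lt with rfl | hL
  · rw [hT1]
    exact integral_nonneg hCnonneg
  obtain ⟨n, rfl⟩ : ∃ n, L = n + 1 := ⟨L - 1, by omega⟩
  have htrunc := setIntegral_le_add_mul_measure_lt_le_integral hCmeas hCint (T n)
  have hweighted := mul_le_mul_of_nonneg_left htrunc (sub_nonneg.mpr hp.2)
  rw [hTrec n (by omega)]
  linarith
end

section
/- Let C be a nonnegative integrable random variable and fix T ≥ 0, p ∈ [0,1], and V ≥ 0. Define f(T) = E[C·1{C ≤ T}] + P(C > T)·(p·E[C] + (1−p)·V). If C has a density (its cdf is differentiable) then f is minimized at T* = p·E[C] + (1−p)·V, and f(T*) = E[min(C, T*)]. -/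
open MeasureTheory

/-!
Both `f T` and `E[min(C, T*)]` are expectations of "pay `C` if `C ≤ T`, otherwise pay `T*`",
with thresholds `T` and `T*` respectively. For `T = T*` this payment is `min(C, T*)`, and for
any other threshold it is pointwise at least `min(C, T*)`, so the claim follows from
monotonicity of the integral.
-/

theorem integral_piecewise_const {Ω : Type*} [MeasurableSpace Ω] (μ : Measure Ω)
    [IsFiniteMeasure μ] {s : Set Ω} [DecidablePred (· ∈ s)] (hs : MeasurableSet s)
    {X : Ω → ℝ} (hX : IntegrableOn X s μ) (K : ℝ) :
    ∫ ω, s.piecewise X (fun _ => K) ω ∂μ = ∫ ω in s, X ω ∂μ + μ.real sᶜ * K := by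
  rw [integral_piecewise hs hX integrableOn_const, setIntegral_const, smul_eq_mul]

theorem min_le_piecewise_setOf_le {Ω : Type*} (C : Ω → ℝ) (T K : ℝ) (ω : Ω) :
    min (C ω) K ≤ {ω | C ω ≤ T}.piecewise C (fun _ => K) ω := by
  by_cases h : C ω ≤ T
  · rw [Set.piecewise_eq_of_mem {ω | C ω ≤ T} C (fun _ => K) h]
    exact min_le_left _ _
  · rw [Set.piecewise_eq_of_notMem {ω | C ω ≤ T} C (fun _ => K) h]
    exact min_le_right _ _

theorem piecewise_setOf_le_self_eq_min {Ω : Type*} (C : Ω → ℝ) (K : ℝ) (ω : Ω) :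
    {ω | C ω ≤ K}.piecewise C (fun _ => K) ω = min (C ω) K := by
  by_cases h : C ω ≤ K
  · rw [Set.piecewise_eq_of_mem {ω | C ω ≤ K} C (fun _ => K) h, min_eq_left h]
  · rw [Set.piecewise_eq_of_notMem {ω | C ω ≤ K} C (fun _ => K) h,
      min_eq_right (le_of_not_ge h)]

theorem optimal_threshold_is_continuation_cost_general
    {Ω : Type*} [MeasurableSpace Ω] (μ : Measure Ω) [IsProbabilityMeasure μ]
    (C : Ω → ℝ) (hCmeas : Measurable C)
    (hCint : Integrable C μ)
    (p : ℝ) (V : ℝ)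
    (f : ℝ → ℝ)
    (hf : ∀ T : ℝ, f T = (∫ ω in {ω | C ω ≤ T}, C ω ∂μ)
      + (μ {ω | T < C ω}).toReal * (p * (∫ ω, C ω ∂μ) + (1 - p) * V)) :
    (∀ T : ℝ, 0 ≤ T → f (p * (∫ ω, C ω ∂μ) + (1 - p) * V) ≤ f T) ∧
      f (p * (∫ ω, C ω ∂μ) + (1 - p) * V)
        = ∫ ω, min (C ω) (p * (∫ ω, C ω ∂μ) + (1 - p) * V) ∂μ := by
  set K : ℝ := p * (∫ ω, C ω ∂μ) + (1 - p) * V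
  have hS : ∀ T : ℝ, MeasurableSet {ω | C ω ≤ T} := fun T => hCmeas measurableSet_Iic
  have hcost (T : ℝ) : f T = ∫ ω, {ω | C ω ≤ T}.piecewise C (fun _ => K) ω ∂μ := by
    rw [hf, integral_piecewise_const μ (hS T) hCint.integrableOn, Set.compl_ofPred,
      measureReal_def]
    simp only [not_le]
  have hint : ∀ T, Integrable ({ω | C ω ≤ T}.piecewise C fun _ => K) μ := fun T =>
    Integrable.piecewise (hS T) hCint.integrableOn (integrable_const K).integrableOn
  refine ⟨fun T _ => ?_, ?_⟩
  · rw [hcost, hcost]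
    refine integral_mono (hint K) (hint T) fun ω => ?_
    rw [piecewise_setOf_le_self_eq_min]
    exact min_le_piecewise_setOf_le C T K ω
  · rw [hcost]
    exact integral_congr_ae (.of_forall (piecewise_setOf_le_self_eq_min C K))

/-- The one-step expected cost `f(T) = E[C·1{C ≤ T}] + P(C > T)(p E[C] + (1-p)V)`
of a threshold-`T` policy is minimized at `T* = p·E[C] + (1-p)·V`, where it equals
`E[min(C, T*)]`. -/
theorem optimal_threshold_is_continuation_cost
    {Ω : Type*} [MeasurableSpace Ω] (μ : Measure Ω) [IsProbabilityMeasure μ]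
    (C : Ω → ℝ) (hCmeas : Measurable C) (hCnonneg : ∀ ω, 0 ≤ C ω)
    (hCint : Integrable C μ)
    (hdens : Differentiable ℝ (fun t : ℝ => (μ {ω | C ω ≤ t}).toReal))
    (p : ℝ) (hp : p ∈ Set.Icc (0 : ℝ) 1) (V : ℝ) (hV : 0 ≤ V)
    (f : ℝ → ℝ)
    (hf : ∀ T : ℝ, f T = (∫ ω in {ω | C ω ≤ T}, C ω ∂μ)
      + (μ {ω | T < C ω}).toReal * (p * (∫ ω, C ω ∂μ) + (1 - p) * V)) :
    (∀ T : ℝ, 0 ≤ T → f (p * (∫ ω, C ω ∂μ) + (1 - p) * V) ≤ f T) ∧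
      f (p * (∫ ω, C ω ∂μ) + (1 - p) * V)
        = ∫ ω, min (C ω) (p * (∫ ω, C ω ∂μ) + (1 - p) * V) ∂μ :=
  optimal_threshold_is_continuation_cost_general μ C hCmeas hCint p V f hf
end

section
/- Let M₁, M₂ be finite multisets of positive integers with M₁ ≤ M₂ in the padded-bijection ordering. Define M − 1 = the multiset {z > 0 : z + 1 ∈ M} obtained by decrementing each element and discarding zeros. Then M₁ − 1 ≤ M₂ − 1. -/
/-- The padded-bijection ordering on finite multisets of nonnegative integers. -/
def PadLE (M₁ M₂ : Multiset ℕ) : Prop :=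
  ∃ l₁ l₂ : List ℕ,
    (l₁ : Multiset ℕ) =
      M₁ + Multiset.replicate (max (Multiset.card M₁) (Multiset.card M₂) - Multiset.card M₁) 0 ∧
    (l₂ : Multiset ℕ) =
      M₂ + Multiset.replicate (max (Multiset.card M₁) (Multiset.card M₂) - Multiset.card M₂) 0 ∧
    List.Forall₂ (· ≤ ·) l₁ l₂

/-- Decrement each remaining lifetime by one and discard expired contents:
`M - 1 = {z > 0 : z + 1 ∈ M}`. -/
def decLifetimes (M : Multiset ℕ) : Multiset ℕ :=
  (M.map (· - 1)).filter (fun z => 0 < z)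

lemma map_sub_forall₂ : ∀ {a b : List ℕ}, List.Forall₂ (· ≤ ·) a b →
    List.Forall₂ (· ≤ ·) (a.map (· - 1)) (b.map (· - 1)) := by
  intro a b h
  induction h with
  | nil => simp
  | cons h _ ih => exact List.Forall₂.cons (Nat.sub_le_sub_right h 1) ih

lemma aux_filter : ∀ {a b : List ℕ}, List.Forall₂ (· ≤ ·) a b →
    ∃ a' : List ℕ, List.Forall₂ (· ≤ ·) a' (b.filter (fun z => 0 < z)) ∧
      (a'.filter (fun z => 0 < z) : Multiset ℕ) = (a.filter (fun z => 0 < z) : Multiset ℕ) := by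
  intro a b h
  induction h with
  | nil => exact ⟨[], by simp, by simp⟩
  | @cons x y at' bt hxy ht ih =>
    obtain ⟨a', h1, h2⟩ := ih
    by_cases hy : 0 < y
    · refine ⟨x :: a', ?_, ?_⟩
      · simpa [List.filter_cons, hy] using List.Forall₂.cons hxy h1
      · by_cases hx : 0 < x <;> simp [List.filter_cons, hx, h2] <;>
          exact Multiset.coe_eq_coe.mp h2
    · have hx : x = 0 := by omega
      refine ⟨a', ?_, ?_⟩
      · simpa [List.filter_cons, hy] using h1
      · simp [List.filter_cons, hx, hy, h2]

/-- The padded-bijection ordering on lifetime multisets is preserved by the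
per-slot decrement (removing expired contents). -/
theorem padLE_decLifetimes
    (M₁ M₂ : Multiset ℕ) (hM₁ : ∀ x ∈ M₁, 0 < x) (hM₂ : ∀ x ∈ M₂, 0 < x)
    (h : PadLE M₁ M₂) :
    PadLE (decLifetimes M₁) (decLifetimes M₂) := by
  obtain ⟨l₁, l₂, e₁, e₂, hf⟩ := h
  have hfd := map_sub_forall₂ hf
  obtain ⟨a', h1, h2⟩ := aux_filter hfd
  have key : ∀ (M : Multiset ℕ) (l : List ℕ) (n : ℕ),
      (l : Multiset ℕ) = M + Multiset.replicate n 0 →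
      ((l.map (· - 1)).filter (fun z => 0 < z) : Multiset ℕ) = decLifetimes M := by
    intro M l n hl
    have hmap : ((l.map (· - 1) : List ℕ) : Multiset ℕ)
        = M.map (· - 1) + Multiset.replicate n 0 := by
      rw [← Multiset.map_coe, hl]
      simp [Multiset.map_replicate]
    have hrep : Multiset.filter (fun z => 0 < z) (Multiset.replicate n 0) = 0 :=
      Multiset.filter_eq_nil.2 (by intro a ha; simp [Multiset.eq_of_mem_replicate ha])
    calc ((l.map (· - 1)).filter (fun z => 0 < z) : Multiset ℕ)
        = Multiset.filter (fun z => 0 < z) ((l.map (· - 1) : List ℕ) : Multiset ℕ) := by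
          simp [Multiset.filter_coe]
      _ = decLifetimes M := by
          rw [hmap, Multiset.filter_add, hrep, add_zero, decLifetimes]
  have k1 := key M₁ l₁ _ e₁
  have k2 := key M₂ l₂ _ e₂
  -- filter of a' as a multiset equals decLifetimes M₁
  have hp1 : Multiset.filter (fun z => 0 < z) (a' : Multiset ℕ) = decLifetimes M₁ := by
    rw [Multiset.filter_coe, h2, k1]
  have hlen : Multiset.card (a' : Multiset ℕ) = Multiset.card (decLifetimes M₂) := by
    rw [← k2]
    simpa using h1.length_eq
  have hsplit := Multiset.filter_add_not (fun z => 0 < z) (a' : Multiset ℕ)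
  have hcardsplit := congrArg Multiset.card hsplit
  rw [Multiset.card_add, hp1] at hcardsplit
  have hcard : Multiset.card (decLifetimes M₁) ≤ Multiset.card (decLifetimes M₂) := by
    omega
  have hmax : max (Multiset.card (decLifetimes M₁)) (Multiset.card (decLifetimes M₂))
      = Multiset.card (decLifetimes M₂) := max_eq_right hcard
  refine ⟨a', (l₂.map (· - 1)).filter (fun z => 0 < z), ?_, ?_, h1⟩
  · rw [hmax]
    have hzero : Multiset.filter (fun z => ¬ 0 < z) (a' : Multiset ℕ)
        = Multiset.replicate
            (Multiset.card (decLifetimes M₂) - Multiset.card (decLifetimes M₁)) 0 := by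
      refine Multiset.eq_replicate.mpr ⟨by omega, ?_⟩
      intro b hb
      have := (Multiset.mem_filter.1 hb).2
      omega
    rw [← hsplit, hp1, hzero]
  · rw [hmax, k2, Nat.sub_self, Multiset.replicate_zero, add_zero]
end

section
/- Let C be a nonnegative bounded random variable, p ∈ (0,1], and define the unlimited-cache thresholds T₁ = 0, T_{L+1} = p·E[C] + (1−p)·E[min(C, T_L)], and the non-causal-knowledge values V₀^{NCK} = E[C], V_G^{NCK} = E[min(C, V_{G−1}^{NCK})]. Then for every L ≥ 1 and G ≥ 0, T_L ≤ V_0^{NCK} = E[C], and the limit T_∞ = lim T_L satisfies T_∞ ≥ lim_G V_G^{NCK} when p ≤ 1. -/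
/-!
Write `f t = E[min(C, t)]` and `I = E[C]`, so that `V_G = f^[G] I` and `T_{L+1} = g^[L] 0` with
`g t = p I + (1 - p) f t`. Both `f` and `g` are monotone and `g` maps `[0, I]` into itself, so
`T` increases and `V` decreases within `[0, I]`, and both converge. Since `f ≤ I` and `f` grows
at most as fast as its argument, `V_G - T_{G+1} ≤ (1 - p)^G I`, which tends to `0` for `p > 0`.
-/

open MeasureTheory Filter Topology Set

theorem min_sub_min_le_posPart {α : Type*} [AddCommGroup α] [LinearOrder α]
    [IsOrderedAddMonoid α] (a b c : α) : min a b - min a c ≤ (b - c)⁺ := by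
  rw [posPart_def]
  rcases le_total a b with hab | hab <;> rcases le_total a c with hac | hac <;>
    simp [hab, hac]

theorem eq_iterate_of_forall_succ {α : Type*} {f : α → α} {u : ℕ → α} {x : α} (h0 : u 0 = x)
    (h : ∀ n, u (n + 1) = f (u n)) (n : ℕ) : u n = f^[n] x := by
  induction n with
  | zero => exact h0
  | succ n ih => rw [h, ih, Function.iterate_succ_apply']

section TruncatedMean

variable {Ω : Type*} [MeasurableSpace Ω] {μ : Measure Ω} {C : Ω → ℝ}

noncomputable def truncatedMean (μ : Measure Ω) (C : Ω → ℝ) (t : ℝ) : ℝ :=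
  ∫ ω, min (C ω) t ∂μ

theorem MeasureTheory.Integrable.min_const [IsFiniteMeasure μ] (hC : Integrable C μ) (t : ℝ) :
    Integrable (fun ω => min (C ω) t) μ :=
  hC.inf (integrable_const t)

theorem truncatedMean_mono [IsFiniteMeasure μ] (hC : Integrable C μ) :
    Monotone (truncatedMean μ C) := fun _ _ hst =>
  integral_mono (hC.min_const _) (hC.min_const _) fun _ => min_le_min le_rfl hst

theorem truncatedMean_le_integral [IsFiniteMeasure μ] (hC : Integrable C μ) (t : ℝ) :
    truncatedMean μ C t ≤ ∫ ω, C ω ∂μ :=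
  integral_mono (hC.min_const t) hC fun _ => min_le_left _ _

theorem truncatedMean_nonneg (hC : ∀ ω, 0 ≤ C ω) {t : ℝ} (ht : 0 ≤ t) :
    0 ≤ truncatedMean μ C t :=
  integral_nonneg fun ω => le_min (hC ω) ht

theorem truncatedMean_sub_le [IsProbabilityMeasure μ] (hC : Integrable C μ) (s t : ℝ) :
    truncatedMean μ C s - truncatedMean μ C t ≤ (s - t)⁺ := by
  calc truncatedMean μ C s - truncatedMean μ C t
      = ∫ ω, (min (C ω) s - min (C ω) t) ∂μ :=
        (integral_sub (hC.min_const s) (hC.min_const t)).symm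
    _ ≤ ∫ _, (s - t)⁺ ∂μ :=
        integral_mono ((hC.min_const s).sub (hC.min_const t)) (integrable_const _)
          fun ω => min_sub_min_le_posPart _ _ _
    _ = (s - t)⁺ := by simp

end TruncatedMean

section Iterates

variable {f : ℝ → ℝ} {p I : ℝ}

def thresholdStep (f : ℝ → ℝ) (p I t : ℝ) : ℝ := p * I + (1 - p) * f t

theorem thresholdStep_iterate_le (hfI : ∀ t, f t ≤ I) (hp : p ≤ 1) (hI : 0 ≤ I) (n : ℕ) :
    (thresholdStep f p I)^[n] 0 ≤ I := by
  have hmaps : MapsTo (thresholdStep f p I) (Iic I) (Iic I) := fun t _ => by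
    have := mul_le_mul_of_nonneg_left (hfI t) (sub_nonneg.mpr hp)
    simp only [thresholdStep, mem_Iic]
    linarith
  exact hmaps.iterate n (mem_Iic.mpr hI)

theorem monotone_thresholdStep_iterate (hf : Monotone f) (hf0 : 0 ≤ f 0) (hp : p ∈ Icc 0 1)
    (hI : 0 ≤ I) : Monotone fun n => (thresholdStep f p I)^[n] 0 := by
  have hstep : Monotone (thresholdStep f p I) := fun _ _ hst =>
    add_le_add_right (mul_le_mul_of_nonneg_left (hf hst) (sub_nonneg.mpr hp.2)) _
  exact hstep.monotone_iterate_of_le_map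
    (add_nonneg (mul_nonneg hp.1 hI) (mul_nonneg (sub_nonneg.mpr hp.2) hf0))

theorem iterate_nonneg (hf : Monotone f) (hf0 : 0 ≤ f 0) (hI : 0 ≤ I) (n : ℕ) :
    0 ≤ f^[n] I := by
  have hmaps : MapsTo f (Ici 0) (Ici 0) := fun _ ht => hf0.trans (hf ht)
  exact hmaps.iterate n hI

theorem iterate_sub_thresholdStep_iterate_le (hfI : ∀ t, f t ≤ I)
    (hsub : ∀ s t, f s - f t ≤ (s - t)⁺) (hp : p ∈ Icc 0 1) (hI : 0 ≤ I) (n : ℕ) :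
    f^[n] I - (thresholdStep f p I)^[n] 0 ≤ (1 - p) ^ n * I := by
  induction n with
  | zero => simp
  | succ n ih =>
    set v := f^[n] I
    set s := (thresholdStep f p I)^[n] 0
    have hq : 0 ≤ 1 - p := sub_nonneg.mpr hp.2
    have hpos : (v - s)⁺ ≤ (1 - p) ^ n * I := sup_le ih (by positivity)
    rw [Function.iterate_succ_apply', Function.iterate_succ_apply']
    calc f v - thresholdStep f p I s = p * (f v - I) + (1 - p) * (f v - f s) := by
          simp only [thresholdStep]; ring
      _ ≤ 0 + (1 - p) * ((1 - p) ^ n * I) := by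
          gcongr
          · exact mul_nonpos_of_nonneg_of_nonpos hp.1 (sub_nonpos.mpr (hfI v))
          · exact (hsub v s).trans hpos
      _ = (1 - p) ^ (n + 1) * I := by ring

theorem exists_tendsto_thresholdStep_iterate (hf : Monotone f) (hf0 : 0 ≤ f 0)
    (hfI : ∀ t, f t ≤ I) (hsub : ∀ s t, f s - f t ≤ (s - t)⁺) (hp : p ∈ Ioc 0 1)
    (hI : 0 ≤ I) :
    ∃ a b : ℝ, Tendsto (fun n => (thresholdStep f p I)^[n] 0) atTop (𝓝 a) ∧
      Tendsto (fun n => f^[n] I) atTop (𝓝 b) ∧ b ≤ a := by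
  have hp' : p ∈ Icc 0 1 := Ioc_subset_Icc_self hp
  have hT := tendsto_atTop_ciSup (monotone_thresholdStep_iterate hf hf0 hp' hI)
    ⟨I, forall_mem_range.mpr (thresholdStep_iterate_le hfI hp.2 hI)⟩
  have hV := tendsto_atTop_ciInf (hf.antitone_iterate_of_map_le (hfI I))
    ⟨0, forall_mem_range.mpr (iterate_nonneg hf hf0 hI)⟩
  have hgeom : Tendsto (fun n : ℕ => (1 - p) ^ n * I) atTop (𝓝 0) := by
    simpa using (tendsto_pow_atTop_nhds_zero_of_lt_one (by linarith [hp.2])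
      (by linarith [hp.1])).mul_const I
  exact ⟨_, _, hT, hV, sub_nonpos.mp <| le_of_tendsto_of_tendsto' (hV.sub hT) hgeom
    (iterate_sub_thresholdStep_iterate_le hfI hsub hp' hI)⟩

end Iterates

theorem thresholds_vs_NCK_general
    {Ω : Type*} [MeasurableSpace Ω] (μ : Measure Ω) [IsProbabilityMeasure μ]
    (C : Ω → ℝ) (hCnonneg : ∀ ω, 0 ≤ C ω) (hCint : Integrable C μ)
    (p : ℝ) (hp : p ∈ Set.Ioc (0 : ℝ) 1)
    (T : ℕ → ℝ) (hT1 : T 1 = 0)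
    (hTrec : ∀ L, 1 ≤ L →
      T (L + 1) = p * (∫ ω, C ω ∂μ) + (1 - p) * ∫ ω, min (C ω) (T L) ∂μ)
    (V : ℕ → ℝ) (hV0 : V 0 = ∫ ω, C ω ∂μ)
    (hVrec : ∀ G : ℕ, V (G + 1) = ∫ ω, min (C ω) (V G) ∂μ) :
    (∀ L, 1 ≤ L → T L ≤ V 0) ∧
      ∃ Tlim Vlim : ℝ,
        Filter.Tendsto T Filter.atTop (nhds Tlim) ∧
        Filter.Tendsto V Filter.atTop (nhds Vlim) ∧
        Vlim ≤ Tlim := by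
  have hI : 0 ≤ ∫ ω, C ω ∂μ := integral_nonneg hCnonneg
  have hfI := truncatedMean_le_integral hCint
  have hT : ∀ n, T (n + 1) = (thresholdStep (truncatedMean μ C) p (∫ ω, C ω ∂μ))^[n] 0 :=
    eq_iterate_of_forall_succ hT1 fun n => hTrec (n + 1) n.succ_pos
  have hV : ∀ n, V n = (truncatedMean μ C)^[n] (∫ ω, C ω ∂μ) :=
    eq_iterate_of_forall_succ hV0 hVrec
  refine ⟨fun L hL => ?_, ?_⟩
  · obtain ⟨n, rfl⟩ := Nat.exists_eq_add_of_le' hL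
    rw [hT, hV0]
    exact thresholdStep_iterate_le hfI hp.2 hI n
  · obtain ⟨a, b, hTa, hVb, hba⟩ := exists_tendsto_thresholdStep_iterate
      (truncatedMean_mono hCint) (truncatedMean_nonneg hCnonneg le_rfl) hfI
      (truncatedMean_sub_le hCint) hp hI
    refine ⟨a, b, (tendsto_add_atTop_iff_nat 1).mp ?_, ?_, hba⟩
    · simpa only [hT] using hTa
    · rwa [funext hV]

/-- Comparison of the unlimited-cache thresholds `T_L` and the non-causal-knowledge
values `V_G`: every threshold is at most `V₀ = E[C]`, both sequences converge, and
the limit of the thresholds dominates the limit of the non-causal-knowledge values. -/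
theorem thresholds_vs_NCK
    {Ω : Type*} [MeasurableSpace Ω] (μ : Measure Ω) [IsProbabilityMeasure μ]
    (C : Ω → ℝ) (hCmeas : Measurable C) (hCnonneg : ∀ ω, 0 ≤ C ω)
    (M : ℝ) (hCbdd : ∀ ω, C ω ≤ M) (hCint : Integrable C μ)
    (p : ℝ) (hp : p ∈ Set.Ioc (0 : ℝ) 1)
    (T : ℕ → ℝ) (hT1 : T 1 = 0)
    (hTrec : ∀ L, 1 ≤ L →
      T (L + 1) = p * (∫ ω, C ω ∂μ) + (1 - p) * ∫ ω, min (C ω) (T L) ∂μ)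
    (V : ℕ → ℝ) (hV0 : V 0 = ∫ ω, C ω ∂μ)
    (hVrec : ∀ G : ℕ, V (G + 1) = ∫ ω, min (C ω) (V G) ∂μ) :
    (∀ L, 1 ≤ L → T L ≤ V 0) ∧
      ∃ Tlim Vlim : ℝ,
        Filter.Tendsto T Filter.atTop (nhds Tlim) ∧
        Filter.Tendsto V Filter.atTop (nhds Vlim) ∧
        Vlim ≤ Tlim :=
  thresholds_vs_NCK_general μ C hCnonneg hCint p hp T hT1 hTrec V hV0 hVrec
end
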